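/- arXiv:2206.05958 — 2 statements merged into one kernel-verified Lean document; each statement's English description precedes it below -/
import Mathlib

section
/- For all X, Y ∈ W, the matrix N⁻(X,Y) + 4·(X·Y − Y·X) commutes with R, where N⁻(X,Y) := ⁅Ĵ⁻X, Ĵ⁻Y⁆ − Ĵ⁻⁅Ĵ⁻X, Y⁆ − Ĵ⁻⁅X, Ĵ⁻Y⁆ + Ĵ⁻(Ĵ⁻⁅X,Y⁆) and ⁅X,Y⁆ = X·Y − Y·X. (This expresses that the Nijenhuis torsion of the invariant almost complex structure j⁻ equals −4 times the bracket modulo the fixed-point subalgebra.) -/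
/-!
Expanding `N⁻(X, Y) + 4⁅X, Y⁆` blockwise for `X = [[0, B], [B', C]]` and `Y = [[0, D], [D', E]]`
in `W`, using only `J² = -1`, `JC = -CJ` and `JE = -EJ`, the off-diagonal blocks cancel and the
lower-right block is `(5/2)(T - JTJ) + 5⁅C, E⁆` with `T = B'D - D'B`. This block commutes with `J`:
`T - JTJ` is twice the `J`-linear part of `T`, and a product of two `J`-antilinear matrices is
`J`-linear. A block-diagonal matrix whose lower-right block commutes with `J` commutes with
`R = diag(1, J)`.
-/

open Matrix

/-- The standard complex structure matrix `J = [[0, -Id_n],[Id_n, 0]]`. -/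
noncomputable def Jmat (n : ℕ) : Matrix (Fin n ⊕ Fin n) (Fin n ⊕ Fin n) ℝ :=
  Matrix.fromBlocks 0 (-1) 1 0

/-- The matrix `R = [[Id_k, 0],[0, J]]` with block sizes `k` and `2n`. -/
noncomputable def Rmat (k n : ℕ) :
    Matrix (Fin k ⊕ (Fin n ⊕ Fin n)) (Fin k ⊕ (Fin n ⊕ Fin n)) ℝ :=
  Matrix.fromBlocks 1 0 0 (Jmat n)

/-- The subspace `W = 𝔤₋₁^σ ⊕ 𝔭` : matrices `[[0,B],[B',C]]` with `CJ + JC = 0`. -/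
def Wset (k n : ℕ) : Set (Matrix (Fin k ⊕ (Fin n ⊕ Fin n)) (Fin k ⊕ (Fin n ⊕ Fin n)) ℝ) :=
  {X | ∃ (B : Matrix (Fin k) (Fin n ⊕ Fin n) ℝ) (B' : Matrix (Fin n ⊕ Fin n) (Fin k) ℝ)
    (C : Matrix (Fin n ⊕ Fin n) (Fin n ⊕ Fin n) ℝ),
    C * Jmat n + Jmat n * C = 0 ∧ X = Matrix.fromBlocks 0 B B' C}

/-- The map `Ĵ⁻ : [[A,B],[B',C]] ↦ [[0, −B·J],[J·B', −(J·C − C·J)/2]]`. -/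
noncomputable def JhatMinus (k n : ℕ)
    (X : Matrix (Fin k ⊕ (Fin n ⊕ Fin n)) (Fin k ⊕ (Fin n ⊕ Fin n)) ℝ) :
    Matrix (Fin k ⊕ (Fin n ⊕ Fin n)) (Fin k ⊕ (Fin n ⊕ Fin n)) ℝ :=
  Matrix.fromBlocks 0 (-(X.toBlocks₁₂ * Jmat n)) (Jmat n * X.toBlocks₂₁)
    (-((1 / 2 : ℝ) • (Jmat n * X.toBlocks₂₂ - X.toBlocks₂₂ * Jmat n)))

/-- The Nijenhuis-type expression `N⁻(X,Y)` built from `Ĵ⁻`. -/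
noncomputable def NMinus (k n : ℕ)
    (X Y : Matrix (Fin k ⊕ (Fin n ⊕ Fin n)) (Fin k ⊕ (Fin n ⊕ Fin n)) ℝ) :
    Matrix (Fin k ⊕ (Fin n ⊕ Fin n)) (Fin k ⊕ (Fin n ⊕ Fin n)) ℝ :=
  (JhatMinus k n X * JhatMinus k n Y - JhatMinus k n Y * JhatMinus k n X)
    - JhatMinus k n (JhatMinus k n X * Y - Y * JhatMinus k n X)
    - JhatMinus k n (X * JhatMinus k n Y - JhatMinus k n Y * X)
    + JhatMinus k n (JhatMinus k n (X * Y - Y * X))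

theorem commute_mul_of_anticommute {R : Type*} [Ring R] {j c e : R}
    (hc : c * j + j * c = 0) (he : e * j + j * e = 0) : Commute (c * e) j := by
  have hc' : j * c = -(c * j) := eq_neg_of_add_eq_zero_right hc
  have he' : e * j = -(j * e) := eq_neg_of_add_eq_zero_left he
  show c * e * j = j * (c * e)
  rw [mul_assoc, he', ← mul_assoc j, hc']
  noncomm_ring

theorem commute_sub_mul_mul_of_mul_self_eq_neg_one {R : Type*} [Ring R] {j : R}
    (hj : j * j = -1) (t : R) : Commute (t - j * t * j) j := by
  have hright : j * t * j * j = -(j * t) := by rw [mul_assoc, hj, mul_neg_one]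
  have hleft : j * (j * t * j) = -(t * j) := by
    rw [← mul_assoc, ← mul_assoc, hj, neg_one_mul, neg_mul]
  show (t - j * t * j) * j = j * (t - j * t * j)
  rw [sub_mul, mul_sub, hright, hleft]
  abel

theorem Matrix.mul_mul_of_anticommute {m α R : Type*} [Fintype m] [CommRing R]
    {j c : Matrix m m R} (h : c * j + j * c = 0) (x : Matrix m α R) :
    j * (c * x) = -(c * (j * x)) := by
  rw [← Matrix.mul_assoc, eq_neg_of_add_eq_zero_right h, Matrix.neg_mul, Matrix.mul_assoc]

theorem Matrix.fromBlocks_sub {l m n o α : Type*} [Sub α] (A : Matrix n l α) (B : Matrix n m α)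
    (C : Matrix o l α) (D : Matrix o m α) (A' : Matrix n l α) (B' : Matrix n m α)
    (C' : Matrix o l α) (D' : Matrix o m α) :
    fromBlocks A B C D - fromBlocks A' B' C' D' =
      fromBlocks (A - A') (B - B') (C - C') (D - D') := by
  ext (_ | _) (_ | _) <;> rfl

theorem Jmat_mul_Jmat (n : ℕ) : Jmat n * Jmat n = -1 := by
  rw [Jmat, fromBlocks_multiply, ← fromBlocks_one, fromBlocks_neg]
  simp

theorem Jmat_mul_Jmat_mul {α : Type*} {n : ℕ} (x : Matrix (Fin n ⊕ Fin n) α ℝ) :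
    Jmat n * (Jmat n * x) = -x := by
  rw [← Matrix.mul_assoc, Jmat_mul_Jmat, Matrix.neg_mul, Matrix.one_mul]

section Blocks

variable {k n : ℕ}

theorem JhatMinus_fromBlocks (A : Matrix (Fin k) (Fin k) ℝ) (B : Matrix (Fin k) (Fin n ⊕ Fin n) ℝ)
    (B' : Matrix (Fin n ⊕ Fin n) (Fin k) ℝ) (C : Matrix (Fin n ⊕ Fin n) (Fin n ⊕ Fin n) ℝ) :
    JhatMinus k n (fromBlocks A B B' C) = fromBlocks 0 (-(B * Jmat n)) (Jmat n * B')
      (-((1 / 2 : ℝ) • (Jmat n * C - C * Jmat n))) := by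
  simp [JhatMinus]

theorem commute_fromBlocks_Rmat (A : Matrix (Fin k) (Fin k) ℝ)
    {D : Matrix (Fin n ⊕ Fin n) (Fin n ⊕ Fin n) ℝ} (hD : Commute D (Jmat n)) :
    Commute (fromBlocks A 0 0 D) (Rmat k n) := by
  show _ * _ = _ * _
  simp [Rmat, fromBlocks_multiply, hD.eq]

theorem NMinus_add_four_smul_commutator_fromBlocks (B D : Matrix (Fin k) (Fin n ⊕ Fin n) ℝ)
    (B' D' : Matrix (Fin n ⊕ Fin n) (Fin k) ℝ) {C E : Matrix (Fin n ⊕ Fin n) (Fin n ⊕ Fin n) ℝ}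
    (hC : C * Jmat n + Jmat n * C = 0) (hE : E * Jmat n + Jmat n * E = 0) :
    ∃ A, NMinus k n (fromBlocks 0 B B' C) (fromBlocks 0 D D' E) +
        (4 : ℝ) • (fromBlocks 0 B B' C * fromBlocks 0 D D' E -
          fromBlocks 0 D D' E * fromBlocks 0 B B' C) =
      fromBlocks A 0 0 ((5 / 2 : ℝ) • (B' * D - D' * B - Jmat n * (B' * D - D' * B) * Jmat n) +
        (5 : ℝ) • (C * E - E * C)) := by
  simp only [NMinus, JhatMinus_fromBlocks, fromBlocks_multiply, fromBlocks_sub, fromBlocks_add,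
    fromBlocks_smul]
  refine ⟨_, fromBlocks_inj.2 ⟨rfl, ?_, ?_, ?_⟩⟩ <;>
  -- moving every `J` to the right past `C` and `E` and cancelling `J * J` gives a normal form
  · simp only [Matrix.mul_add, Matrix.add_mul, Matrix.mul_sub, Matrix.sub_mul, Matrix.mul_neg,
      Matrix.neg_mul, Matrix.mul_assoc, Matrix.mul_smul, Matrix.smul_mul, Matrix.zero_mul,
      Matrix.mul_zero, Matrix.mul_one, Jmat_mul_Jmat, Jmat_mul_Jmat_mul,
      Matrix.mul_mul_of_anticommute hC, Matrix.mul_mul_of_anticommute hE,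
      eq_neg_of_add_eq_zero_right hC, eq_neg_of_add_eq_zero_right hE]
    module

end Blocks

theorem jMinus_nijenhuis_general (k n : ℕ)
    (X Y : Matrix (Fin k ⊕ (Fin n ⊕ Fin n)) (Fin k ⊕ (Fin n ⊕ Fin n)) ℝ)
    (hX : X ∈ Wset k n) (hY : Y ∈ Wset k n) :
    (NMinus k n X Y + (4 : ℝ) • (X * Y - Y * X)) * Rmat k n =
      Rmat k n * (NMinus k n X Y + (4 : ℝ) • (X * Y - Y * X)) := by
  obtain ⟨B, B', C, hC, rfl⟩ := hX
  obtain ⟨D, D', E, hE, rfl⟩ := hY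
  obtain ⟨A, hA⟩ := NMinus_add_four_smul_commutator_fromBlocks B D B' D' hC hE
  have hT := commute_sub_mul_mul_of_mul_self_eq_neg_one (Jmat_mul_Jmat n) (B' * D - D' * B)
  have hCE := (commute_mul_of_anticommute hC hE).sub_left (commute_mul_of_anticommute hE hC)
  rw [hA]
  exact commute_fromBlocks_Rmat A ((hT.smul_left _).add_left (hCE.smul_left _))

theorem jMinus_nijenhuis (k n : ℕ) (hk : 0 < k) (hn : 0 < n)
    (X Y : Matrix (Fin k ⊕ (Fin n ⊕ Fin n)) (Fin k ⊕ (Fin n ⊕ Fin n)) ℝ)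
    (hX : X ∈ Wset k n) (hY : Y ∈ Wset k n) :
    (NMinus k n X Y + (4 : ℝ) • (X * Y - Y * X)) * Rmat k n =
      Rmat k n * (NMinus k n X Y + (4 : ℝ) • (X * Y - Y * X)) :=
  jMinus_nijenhuis_general k n X Y hX hY
end

section
/- Let V_o := {C ∈ Mat(2n×2n,ℝ) : Cᵀ = −C and C·J + J·C = 0}. For every D ∈ Mat(2n×2n,ℝ) with D·J = J·D and Dᵀ = D, the linear map C ↦ D·C + C·D preserves V_o, and its trace as an endomorphism of V_o equals (n−1)·Tr(D). (This is the trace identity used for the orthogonal families so(k+2n) and so(k,2n), giving the Einstein constant ½(k+n−1) and the Chern–Ricci constant (n−1−k).) -/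
open Matrix LinearMap

section helpers
variable {m : Type*} [Fintype m] [DecidableEq m]

noncomputable def matBasis (m : Type*) [Fintype m] [DecidableEq m] :
    Module.Basis (m × m) ℝ (Matrix m m ℝ) :=
  Module.Basis.ofEquivFun ((Matrix.ofLinearEquiv ℝ).symm.trans (LinearEquiv.curry ℝ ℝ m m).symm)

lemma matBasis_apply (p : m × m) : matBasis m p = Matrix.single p.1 p.2 (1:ℝ) := by
  ext i j
  simp [matBasis, Module.Basis.ofEquivFun, Matrix.single, LinearEquiv.curry, Pi.single_apply,
    Prod.ext_iff, and_comm]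
  by_cases h1 : i = p.1 <;> by_cases h2 : j = p.2 <;> simp [h1, h2, Pi.single_apply, eq_comm]

lemma trace_eq_sum_entries (f : Matrix m m ℝ →ₗ[ℝ] Matrix m m ℝ) :
    trace ℝ _ f = ∑ p : m × m, f (Matrix.single p.1 p.2 (1:ℝ)) p.1 p.2 := by
  rw [trace_eq_matrix_trace ℝ (matBasis m), Matrix.trace]
  refine Finset.sum_congr rfl fun p _ => ?_
  rw [Matrix.diag_apply, LinearMap.toMatrix_apply, matBasis_apply]
  simp [matBasis, Module.Basis.ofEquivFun, Finsupp.linearEquivFunOnFinite, Function.uncurry]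

/-- transpose as a linear map -/
noncomputable def Tmap (m : Type*) : Matrix m m ℝ →ₗ[ℝ] Matrix m m ℝ where
  toFun := Matrix.transpose
  map_add' := Matrix.transpose_add
  map_smul' := Matrix.transpose_smul

@[simp] lemma Tmap_apply (C : Matrix m m ℝ) : Tmap m C = Cᵀ := rfl

/-- C ↦ A * C * B -/
noncomputable def LR (A B : Matrix m m ℝ) : Matrix m m ℝ →ₗ[ℝ] Matrix m m ℝ :=
  (mulLeft ℝ A).comp (mulRight ℝ B)

@[simp] lemma LR_apply (A B C : Matrix m m ℝ) : LR A B C = A * C * B := by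
  simp [LR, mul_assoc]

lemma trace_LR (A B : Matrix m m ℝ) : trace ℝ _ (LR A B) = A.trace * B.trace := by
  rw [trace_eq_sum_entries]
  simp only [LR_apply]
  rw [Matrix.trace, Matrix.trace, Finset.sum_mul_sum, Fintype.sum_prod_type]
  refine Finset.sum_congr rfl fun i _ => Finset.sum_congr rfl fun j _ => ?_
  simp [Matrix.mul_apply, Matrix.single, ite_and, Finset.mul_sum, Finset.sum_ite_eq,
    Finset.sum_ite_eq']

lemma trace_LRT (A B : Matrix m m ℝ) :
    trace ℝ _ ((LR A B).comp (Tmap m)) = (A * Bᵀ).trace := by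
  rw [trace_eq_sum_entries]
  simp only [LinearMap.comp_apply, Tmap_apply, LR_apply]
  rw [Matrix.trace, Fintype.sum_prod_type]
  refine Finset.sum_congr rfl fun i _ => ?_
  rw [Matrix.diag_apply, Matrix.mul_apply]
  refine Finset.sum_congr rfl fun j _ => ?_
  simp [Matrix.mul_apply, Matrix.single, Matrix.transpose, ite_and, Finset.mul_sum,
    Finset.sum_ite_eq, Finset.sum_ite_eq']

lemma trace_restrict_eq_trace_comp {M : Type*} [AddCommGroup M] [Module ℝ M]
    [FiniteDimensional ℝ M] {p : Submodule ℝ M} {π g : M →ₗ[ℝ] M} (hπ : IsProj p π)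
    (hg : ∀ x ∈ p, g x ∈ p) :
    trace ℝ p (g.restrict hg) = trace ℝ M (g ∘ₗ π) := by
  have hc := hπ.isCompl
  set e := Submodule.prodEquivOfIsCompl p (ker π) hc with he
  have key : e.conj (prodMap (g.restrict hg) 0) = g ∘ₗ π := by
    apply LinearMap.ext; intro x
    rcases Submodule.existsUnique_add_of_isCompl hc x with ⟨a, b, hab, -⟩
    have hx : x = e (a, b) := by
      simp [he, Submodule.coe_prodEquivOfIsCompl', hab]
    rw [hx, LinearEquiv.conj_apply_apply, LinearEquiv.symm_apply_apply]
    have hπx : π (e (a, b)) = a := by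
      have h1 : π (a : M) = a := hπ.map_id a a.2
      have h2 : π (b : M) = 0 := b.2
      simp [he, Submodule.coe_prodEquivOfIsCompl', map_add, h1, h2]
    simp only [LinearMap.comp_apply, hπx, prodMap_apply, LinearMap.zero_apply]
    simp [he, Submodule.coe_prodEquivOfIsCompl', restrict_apply]
  rw [← key, LinearMap.trace_conj', trace_prodMap', map_zero, add_zero]

end helpers

section Jfacts
variable (n : ℕ)

lemma Jmat_eq : Jmat n = Matrix.J (Fin n) ℝ := rfl

lemma Jmat_transpose : (Jmat n)ᵀ = -Jmat n := by
  rw [Jmat_eq, Matrix.J_transpose]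

lemma Jmat_sq : Jmat n * Jmat n = -1 := by
  rw [Jmat_eq, Matrix.J_squared]

lemma Jmat_trace : (Jmat n).trace = 0 := by
  simp [Jmat, Matrix.trace, Fintype.sum_sum_type, Matrix.fromBlocks, Matrix.diag]

end Jfacts


/-- The subspace `V_o = {C : Cᵀ = −C and C·J + J·C = 0}` of `2n×2n` real matrices. -/
noncomputable def Vo (n : ℕ) : Submodule ℝ (Matrix (Fin n ⊕ Fin n) (Fin n ⊕ Fin n) ℝ) where
  carrier := {C | C.transpose = -C ∧ C * Jmat n + Jmat n * C = 0}
  add_mem' := by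
    rintro a b ⟨ha1, ha2⟩ ⟨hb1, hb2⟩
    refine ⟨by rw [Matrix.transpose_add, ha1, hb1, neg_add], ?_⟩
    rw [add_mul, mul_add]
    calc a * Jmat n + b * Jmat n + (Jmat n * a + Jmat n * b)
        = (a * Jmat n + Jmat n * a) + (b * Jmat n + Jmat n * b) := by abel
      _ = 0 := by rw [ha2, hb2]; simp
  zero_mem' := by simp
  smul_mem' := by
    rintro c x ⟨hx1, hx2⟩
    refine ⟨by rw [Matrix.transpose_smul, hx1, smul_neg], ?_⟩
    rw [Matrix.smul_mul, Matrix.mul_smul, ← smul_add, hx2, smul_zero]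


section main
variable (n : ℕ)

/-- the projection onto Vo -/
noncomputable def pimap : Matrix (Fin n ⊕ Fin n) (Fin n ⊕ Fin n) ℝ →ₗ[ℝ]
    Matrix (Fin n ⊕ Fin n) (Fin n ⊕ Fin n) ℝ :=
  (4⁻¹ : ℝ) • (LinearMap.id - Tmap _ + LR (Jmat n) (Jmat n)
    - (LR (Jmat n) (Jmat n)).comp (Tmap _))

lemma pimap_apply (x : Matrix (Fin n ⊕ Fin n) (Fin n ⊕ Fin n) ℝ) :
    pimap n x = (4⁻¹ : ℝ) • (x - xᵀ + Jmat n * x * Jmat n - Jmat n * xᵀ * Jmat n) := by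
  simp [pimap, mul_assoc]

lemma pimap_isProj : IsProj (Vo n) (pimap n) := by
  have hJt : (Jmat n)ᵀ = -Jmat n := Jmat_transpose n
  have hJ2 : Jmat n * Jmat n = -1 := Jmat_sq n
  set J := Jmat n with hJ
  constructor
  · intro x
    rw [pimap_apply, ← hJ]
    set u := x - xᵀ with hu
    have hut : uᵀ = -u := by simp [hu, sub_eq_neg_add]
    have hw : x - xᵀ + J * x * J - J * xᵀ * J = u + J * u * J := by
      simp [hu, mul_sub, sub_mul]; abel
    rw [hw]
    constructor
    · rw [Matrix.transpose_smul, Matrix.transpose_add, Matrix.transpose_mul,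
        Matrix.transpose_mul, hut, hJt]
      simp [mul_assoc]
      module
    · rw [Matrix.smul_mul, Matrix.mul_smul, ← smul_add]
      have e2 : J * u * J * J = -(J * u) := by rw [mul_assoc, hJ2, mul_neg_one]
      have e3 : J * (J * u * J) = -(u * J) := by
        rw [show J * (J * u * J) = J * J * u * J by noncomm_ring, hJ2]; simp
      have e1 : (u + J * u * J) * J + J * (u + J * u * J) = 0 := by
        rw [show (u + J * u * J) * J + J * (u + J * u * J)
            = (u * J + J * u) + (J * u * J * J + J * (J * u * J)) by noncomm_ring, e2, e3]
        abel
      rw [e1, smul_zero]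
  · intro x hx
    obtain ⟨h1, h2⟩ := hx
    have h2' : x * J + J * x = 0 := h2
    have hJx : J * x = -(x * J) := eq_neg_of_add_eq_zero_right h2'
    have h3 : J * x * J = x := by
      rw [hJx, neg_mul, mul_assoc, hJ2]; simp
    rw [pimap_apply, ← hJ, h1]
    have h5 : x - -x + J * x * J - J * (-x) * J = (4 : ℝ) • x := by
      rw [show J * (-x) * J = -(J * x * J) by simp, h3]
      push_cast
      module
    rw [h5, smul_smul]
    norm_num

end main

theorem trace_identity_orthogonal (n : ℕ) (hn : 0 < n)
    (D : Matrix (Fin n ⊕ Fin n) (Fin n ⊕ Fin n) ℝ)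
    (hDJ : D * Jmat n = Jmat n * D) (hDt : D.transpose = D) :
    ∃ h : ∀ C ∈ Vo n, (LinearMap.mulLeft ℝ D + LinearMap.mulRight ℝ D) C ∈ Vo n,
      LinearMap.trace ℝ ↥(Vo n)
          ((LinearMap.mulLeft ℝ D + LinearMap.mulRight ℝ D).restrict h) =
        ((n : ℝ) - 1) * Matrix.trace D := by
  have hJt : (Jmat n)ᵀ = -Jmat n := Jmat_transpose n
  have hJ2 : Jmat n * Jmat n = -1 := Jmat_sq n
  have h : ∀ C ∈ Vo n, (LinearMap.mulLeft ℝ D + LinearMap.mulRight ℝ D) C ∈ Vo n := by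
    rintro C ⟨h1, h2⟩
    have hCJ : C * Jmat n = -(Jmat n * C) := eq_neg_of_add_eq_zero_left h2
    have happ : (LinearMap.mulLeft ℝ D + LinearMap.mulRight ℝ D) C = D * C + C * D := by
      simp
    rw [happ]
    constructor
    · rw [Matrix.transpose_add, Matrix.transpose_mul, Matrix.transpose_mul, hDt, h1]
      simp [neg_add]
    · have e1 : D * C * Jmat n = -(Jmat n * (D * C)) := by
        rw [mul_assoc, hCJ, mul_neg, ← mul_assoc, hDJ, mul_assoc]
      have e2 : C * D * Jmat n = -(Jmat n * (C * D)) := by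
        rw [mul_assoc, hDJ, ← mul_assoc, hCJ, neg_mul, mul_assoc]
      rw [add_mul, mul_add, e1, e2]
      abel
  refine ⟨h, ?_⟩
  rw [trace_restrict_eq_trace_comp (pimap_isProj n) h]
  have hdecomp : (LinearMap.mulLeft ℝ D + LinearMap.mulRight ℝ D) ∘ₗ pimap n
      = (4⁻¹ : ℝ) • (LR D 1 + LR 1 D
          - ((LR D 1).comp (Tmap _) + (LR 1 D).comp (Tmap _))
          + (LR (D * Jmat n) (Jmat n) + LR (Jmat n) (Jmat n * D))
          - ((LR (D * Jmat n) (Jmat n)).comp (Tmap _)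
              + (LR (Jmat n) (Jmat n * D)).comp (Tmap _))) := by
    apply LinearMap.ext; intro C
    simp only [LinearMap.comp_apply, LinearMap.add_apply, LinearMap.sub_apply,
      LinearMap.smul_apply, LR_apply, Tmap_apply, LinearMap.mulLeft_apply,
      LinearMap.mulRight_apply, pimap_apply]
    rw [Matrix.mul_smul, Matrix.smul_mul, ← smul_add]
    congr 1
    noncomm_ring
  rw [hdecomp, _root_.map_smul]
  simp only [map_add, map_sub, trace_LR, trace_LRT]
  have t0 : Matrix.trace (1 : Matrix (Fin n ⊕ Fin n) (Fin n ⊕ Fin n) ℝ) = (2 * n : ℝ) := by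
    rw [Matrix.trace_one]
    simp [Fintype.card_sum, Fintype.card_fin]
    push_cast
    ring
  have t1 : (D * Jmat n * (Jmat n)ᵀ).trace = D.trace := by
    rw [hJt, mul_neg, mul_assoc, hJ2]
    simp
  have t2 : (Jmat n * (Jmat n * D)ᵀ).trace = D.trace := by
    rw [Matrix.transpose_mul, hDt, hJt, mul_neg, mul_neg, Matrix.trace_neg,
      Matrix.trace_mul_comm (Jmat n) (D * Jmat n), mul_assoc, hJ2]
    simp
  rw [t1, t2, Jmat_trace]
  simp only [Matrix.transpose_one, mul_one, one_mul, Matrix.trace_transpose, t0, smul_eq_mul]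
  push_cast
  ring
end
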